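/- Consider the layer map Y(u) = σ(∑_{k=1}^K a_k ⟨B_k(·,u), X(·)⟩_{N_u^{(k)}} + bias), where σ: ℝ → ℝ is 1-Lipschitz (non-expansive), the neighborhoods satisfy the symmetry v ∈ N_u^{(k)} ⟺ u ∈ N_v^{(k)} and ∑_{k=1}^K |N_u^{(k)}| ≤ Kp for all u, and β := sup_{k,u} ‖B_k(·,u)‖_{2,N_u^{(k)}}. Then for any two inputs X, X̃ with Δ X = X̃ - X, the outputs satisfy ‖ΔY‖₂ ≤ β ‖a‖₂ √(Kp) ‖ΔX‖₂. -/

import Mathlib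

/-!
The difference of the two outputs at `u` is controlled, through the non-expansive `σ` and
Cauchy–Schwarz in `k`, by `‖a‖₂² ∑ₖ (∑_{v ∈ N_u^{(k)}} B_k(v,u) ΔX(v))²`, and each inner sum by
`β² ∑_{v ∈ N_u^{(k)}} ΔX(v)²` (Cauchy–Schwarz on the neighbourhood). Summing over `u`, the
symmetry of the neighbourhoods lets us swap the sums, so that `ΔX(v)²` is counted
`∑ₖ |N_v^{(k)}| ≤ K p` times.
-/

open Finset

theorem Finset.sum_sum_mem_of_symm_eq_sum_card_smul {ι M : Type*} [Fintype ι] [AddCommMonoid M]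
    {N : ι → Finset ι} (hsym : ∀ u v, v ∈ N u ↔ u ∈ N v) (g : ι → M) :
    ∑ u, ∑ v ∈ N u, g v = ∑ v, (N v).card • g v := by
  rw [Finset.sum_comm' (t' := univ) (s' := N) (fun u v => by simp [hsym u v])]
  simp only [sum_const]

theorem sq_sum_mul_le_of_sqrt_sum_sq_le {ι : Type*} {s : Finset ι} {f : ι → ℝ} {β : ℝ}
    (hβ : √(∑ i ∈ s, f i ^ 2) ≤ β) (g : ι → ℝ) :
    (∑ i ∈ s, f i * g i) ^ 2 ≤ β ^ 2 * ∑ i ∈ s, g i ^ 2 :=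
  (sum_mul_sq_le_sq_mul_sq s f g).trans <|
    mul_le_mul_of_nonneg_right (Real.sqrt_le_iff.mp hβ).2 (sum_nonneg fun _ _ => sq_nonneg _)

theorem sq_sub_comp_weighted_sum_le {ι : Type*} {σ : ℝ → ℝ}
    (hσ : ∀ s t : ℝ, |σ s - σ t| ≤ |s - t|) (s : Finset ι) (a x y : ι → ℝ) (b : ℝ) :
    (σ (∑ i ∈ s, a i * x i + b) - σ (∑ i ∈ s, a i * y i + b)) ^ 2 ≤
      (∑ i ∈ s, a i ^ 2) * ∑ i ∈ s, (x i - y i) ^ 2 := by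
  have hdiff : (∑ i ∈ s, a i * x i + b) - (∑ i ∈ s, a i * y i + b) =
      ∑ i ∈ s, a i * (x i - y i) := by
    simp only [mul_sub, sum_sub_distrib, add_sub_add_right_eq_sub]
  calc (σ (∑ i ∈ s, a i * x i + b) - σ (∑ i ∈ s, a i * y i + b)) ^ 2
      ≤ (∑ i ∈ s, a i * (x i - y i)) ^ 2 := by
        rw [sq_le_sq, ← hdiff]
        exact hσ _ _
    _ ≤ _ := sum_mul_sq_le_sq_mul_sq s a _

theorem sum_sum_sq_local_filter_le {κ V : Type*} [Fintype κ] [Fintype V]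
    {N : κ → V → Finset V} {B : κ → V → V → ℝ} {m : ℕ} {β : ℝ}
    (hsym : ∀ k u v, v ∈ N k u ↔ u ∈ N k v) (hcount : ∀ u, ∑ k, (N k u).card ≤ m)
    (hβ : ∀ k u, √(∑ v ∈ N k u, B k v u ^ 2) ≤ β) (Δ : V → ℝ) :
    ∑ u, ∑ k, (∑ v ∈ N k u, B k v u * Δ v) ^ 2 ≤ β ^ 2 * m * ∑ v, Δ v ^ 2 := by
  calc ∑ u, ∑ k, (∑ v ∈ N k u, B k v u * Δ v) ^ 2
      ≤ ∑ u, ∑ k, β ^ 2 * ∑ v ∈ N k u, Δ v ^ 2 := by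
        gcongr with u _ k _
        exact sq_sum_mul_le_of_sqrt_sum_sq_le (hβ k u) Δ
    _ = β ^ 2 * ∑ v, (∑ k, ((N k v).card : ℝ)) * Δ v ^ 2 := by
        simp only [← mul_sum, sum_mul]
        rw [sum_comm]
        simp only [sum_sum_mem_of_symm_eq_sum_card_smul (hsym _), nsmul_eq_mul]
        rw [sum_comm]
    _ ≤ β ^ 2 * ∑ v, (m : ℝ) * Δ v ^ 2 := by
        gcongr with v
        exact_mod_cast hcount v
    _ = β ^ 2 * m * ∑ v, Δ v ^ 2 := by rw [← mul_sum, mul_assoc]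

theorem layer_stability_general {V : Type*} [Fintype V]
    (K p : ℕ) (a : Fin K → ℝ) (N : Fin K → V → Finset V)
    (B : Fin K → V → V → ℝ) (bias : ℝ) (σ : ℝ → ℝ)
    (hσ : ∀ s t : ℝ, |σ s - σ t| ≤ |s - t|)
    (hsym : ∀ (k : Fin K) (u v : V), v ∈ N k u ↔ u ∈ N k v)
    (hcount : ∀ u : V, ∑ k : Fin K, (N k u).card ≤ K * p)
    (β : ℝ)
    (hβ : ∀ (k : Fin K) (u : V), Real.sqrt (∑ v ∈ N k u, (B k v u) ^ 2) ≤ β)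
    (X Xt : V → ℝ)
    (Y : (V → ℝ) → V → ℝ)
    (hY : ∀ (Z : V → ℝ) (u : V),
      Y Z u = σ (∑ k : Fin K, a k * ∑ v ∈ N k u, B k v u * Z v + bias)) :
    Real.sqrt (∑ u : V, (Y Xt u - Y X u) ^ 2) ≤
      β * Real.sqrt (∑ k : Fin K, a k ^ 2) * Real.sqrt ((K : ℝ) * p) *
        Real.sqrt (∑ u : V, (Xt u - X u) ^ 2) := by
  rcases isEmpty_or_nonempty V with hV | ⟨⟨u₀⟩⟩
  · simp
  rcases K.eq_zero_or_pos with rfl | hK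
  · simp [hY]
  have hβ₀ : 0 ≤ β := (Real.sqrt_nonneg _).trans (hβ ⟨0, hK⟩ u₀)
  have hpoint : ∀ u, (Y Xt u - Y X u) ^ 2 ≤
      (∑ k, a k ^ 2) * ∑ k, (∑ v ∈ N k u, B k v u * (Xt v - X v)) ^ 2 := fun u => by
    simpa only [hY, mul_sub, sum_sub_distrib] using sq_sub_comp_weighted_sum_le hσ univ a _ _ bias
  have henergy := sum_sum_sq_local_filter_le hsym hcount hβ (fun v => Xt v - X v)
  calc √(∑ u, (Y Xt u - Y X u) ^ 2)
      ≤ √((∑ k, a k ^ 2) * (β ^ 2 * ((K : ℝ) * p) * ∑ u, (Xt u - X u) ^ 2)) := by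
        refine Real.sqrt_le_sqrt ((sum_le_sum fun u _ => hpoint u).trans ?_)
        rw [← mul_sum]
        push_cast at henergy
        gcongr
    _ = _ := by
        rw [Real.sqrt_mul (by positivity), Real.sqrt_mul (by positivity),
          Real.sqrt_mul (by positivity), Real.sqrt_sq hβ₀]
        ring

/-- Representation stability of the low-rank local filter layer (Theorem 1):
with 1-Lipschitz `σ`, symmetric neighborhoods, `∑_k |N_u^{(k)}| ≤ K p`, and
local filter norms bounded by `β`, we get `‖ΔY‖₂ ≤ β ‖a‖₂ √(Kp) ‖ΔX‖₂`. -/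
theorem layer_stability {V : Type*} [Fintype V] [DecidableEq V]
    (K p : ℕ) (a : Fin K → ℝ) (N : Fin K → V → Finset V)
    (B : Fin K → V → V → ℝ) (bias : ℝ) (σ : ℝ → ℝ)
    (hσ : ∀ s t : ℝ, |σ s - σ t| ≤ |s - t|)
    (hsym : ∀ (k : Fin K) (u v : V), v ∈ N k u ↔ u ∈ N k v)
    (hcount : ∀ u : V, ∑ k : Fin K, (N k u).card ≤ K * p)
    (β : ℝ)
    (hβ : ∀ (k : Fin K) (u : V), Real.sqrt (∑ v ∈ N k u, (B k v u) ^ 2) ≤ β)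
    (X Xt : V → ℝ)
    (Y : (V → ℝ) → V → ℝ)
    (hY : ∀ (Z : V → ℝ) (u : V),
      Y Z u = σ (∑ k : Fin K, a k * ∑ v ∈ N k u, B k v u * Z v + bias)) :
    Real.sqrt (∑ u : V, (Y Xt u - Y X u) ^ 2) ≤
      β * Real.sqrt (∑ k : Fin K, a k ^ 2) * Real.sqrt ((K : ℝ) * p) *
        Real.sqrt (∑ u : V, (Xt u - X u) ^ 2) :=
  layer_stability_general K p a N B bias σ hσ hsym hcount β hβ X Xt Y hY
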